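/- Let α > 0 and β > 0, and define h(x) = (α^{1/β}/(αβ))·exp(α/x^β)·x^{1+β}·[Γ(1 − 1/β; α) − Γ(1 − 1/β; α/x^β)] for x ∈ (0,1), where Γ(s; y) = ∫_y^∞ t^{s−1} e^{−t} dt. Suppose f is a positive, differentiable function on (0,1) with ∫_0^1 f(t) dt = 1 (with t·f(t) integrable on (0,1)) such that for every x ∈ (0,1), ∫_x^1 t·f(t) dt = h(x)·f(x). Then f(x) = αβ·exp(−α(x^{−β} − 1))/x^{1+β} for every x ∈ (0,1), i.e., f is the unit-Gompertz density with parameters α and β. -/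

import Mathlib

/-- The upper incomplete gamma function `Γ(s; y) = ∫_y^∞ t^(s-1) e^(-t) dt`. -/
noncomputable def uiGamma (s y : ℝ) : ℝ :=
  ∫ t in Set.Ioi y, t ^ (s - 1) * Real.exp (-t)

/-!
Write `g` for the unit-Gompertz density. Since `x ↦ e^α α^(1/β) Γ(1 - 1/β; α x^(-β))` is an
antiderivative of `x g(x)`, the density `g` satisfies the same identity `∫_x^1 t g = h g` as `f`.
The ratio `(∫_x^1 t f) / (∫_x^1 t g)` then has derivative
`(-x f · h g + h f · x g) / (∫_x^1 t g)² = 0`, so it is a constant `c`, and it equals `f / g`.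
Hence `f = c g`, and `c = 1` because both `f` and `g` integrate to `1` over `(0, 1)`.
-/

open Real MeasureTheory Set Filter Topology intervalIntegral

theorem integrableOn_rpow_mul_exp_neg_Ioi (s : ℝ) {y : ℝ} (hy : 0 < y) :
    IntegrableOn (fun t : ℝ => t ^ s * exp (-t)) (Ioi y) := by
  refine integrable_of_isBigO_exp_neg one_half_pos ?_ ?_
  · exact (continuousOn_id.rpow_const fun t ht => Or.inl (hy.trans_le ht).ne').mul
      continuousOn_id.neg.rexp
  · simpa only [mul_comm] using (Gamma_integrand_isLittleO s).isBigO

theorem uiGamma_eq_sub_integral (s : ℝ) {y z : ℝ} (hy : 0 < y) (hz : 0 < z) :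
    uiGamma s z = uiGamma s y - ∫ t in y..z, t ^ (s - 1) * exp (-t) := by
  rw [uiGamma, uiGamma, ← integral_Ioi_sub_Ioi' (integrableOn_rpow_mul_exp_neg_Ioi _ hy)
    (integrableOn_rpow_mul_exp_neg_Ioi _ hz)]
  ring

theorem hasDerivAt_uiGamma (s : ℝ) {y : ℝ} (hy : 0 < y) :
    HasDerivAt (uiGamma s) (-(y ^ (s - 1) * exp (-y))) y := by
  have hcont : ContinuousOn (fun t : ℝ => t ^ (s - 1) * exp (-t)) (Ioi 0) :=
    (continuousOn_id.rpow_const fun t ht => Or.inl (ne_of_gt ht)).mul continuousOn_id.neg.rexp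
  have hint := integral_hasDerivAt_right (IntervalIntegrable.refl (a := y))
    (hcont.stronglyMeasurableAtFilter isOpen_Ioi _ hy) (hcont.continuousAt (Ioi_mem_nhds hy))
  refine ((hasDerivAt_const y (uiGamma s y)).sub hint).congr_of_eventuallyEq ?_ |>.congr_deriv
    (zero_sub _)
  filter_upwards [Ioi_mem_nhds hy] with z hz using uiGamma_eq_sub_integral s hy hz

theorem intervalIntegrable_deriv_of_nonneg_of_tendsto {g g' : ℝ → ℝ} {a b ga gb : ℝ}
    (hab : a < b) (hderiv : ∀ x ∈ Ioo a b, HasDerivAt g (g' x) x)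
    (hpos : ∀ x ∈ Ioo a b, 0 ≤ g' x) (ha : Tendsto g (𝓝[>] a) (𝓝 ga))
    (hb : Tendsto g (𝓝[<] b) (𝓝 gb)) : IntervalIntegrable g' volume a b := by
  classical
  set G : ℝ → ℝ := Function.update (Function.update g a ga) b gb
  have hG : ∀ x ∈ Ioo a b, G x = g x := fun x hx => by
    simp only [G, Function.update_of_ne hx.2.ne, Function.update_of_ne hx.1.ne']
  have hcont : ContinuousOn G (Icc a b) := by
    rw [continuousOn_update_iff, continuousOn_update_iff, Icc_sdiff_right, Ico_sdiff_left]
    refine ⟨⟨fun z hz => (hderiv z hz).continuousAt.continuousWithinAt, ?_⟩, ?_⟩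
    · exact fun _ => ha.mono_left (nhdsWithin_mono _ Ioo_subset_Ioi_self)
    · rintro -
      refine (hb.congr' ?_).mono_left (nhdsWithin_mono _ Ico_subset_Iio_self)
      filter_upwards [Ioo_mem_nhdsLT hab] with z hz
        using (Function.update_of_ne hz.1.ne' _ _).symm
  refine (intervalIntegrable_iff_integrableOn_Ioc_of_le hab.le).2 <|
    integrableOn_deriv_of_nonneg hcont (fun x hx => ?_) hpos
  exact (hderiv x hx).congr_of_eventuallyEq <| by
    filter_upwards [Ioo_mem_nhds hx.1 hx.2] with z hz using hG z hz

theorem hasDerivAt_integral_left_of_continuousOn {u : ℝ → ℝ} {a b x : ℝ}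
    (hu : ContinuousOn u (Ioo a b)) (hi : IntervalIntegrable u volume a b) (hx : x ∈ Ioo a b) :
    HasDerivAt (fun z => ∫ t in z..b, u t) (-u x) x :=
  integral_hasDerivAt_left
    (hi.mono_set (uIcc_subset_uIcc_right (Icc_subset_uIcc (Ioo_subset_Icc_self hx))))
    (hu.stronglyMeasurableAtFilter isOpen_Ioo _ hx) (hu.continuousAt (Ioo_mem_nhds hx.1 hx.2))

theorem exists_eqOn_const_mul_of_integral_mul_eq {f g h : ℝ → ℝ} {a b : ℝ}
    (hf : ContinuousOn f (Ioo a b)) (hg : ContinuousOn g (Ioo a b))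
    (hfi : IntervalIntegrable (fun t => t * f t) volume a b)
    (hgi : IntervalIntegrable (fun t => t * g t) volume a b)
    (hfh : ∀ x ∈ Ioo a b, ∫ t in x..b, t * f t = h x * f x)
    (hgh : ∀ x ∈ Ioo a b, ∫ t in x..b, t * g t = h x * g x)
    (hg0 : ∀ x ∈ Ioo a b, ∫ t in x..b, t * g t ≠ 0) :
    ∃ c, EqOn f (fun x => c * g x) (Ioo a b) := by
  have htf : ContinuousOn (fun t => t * f t) (Ioo a b) := continuousOn_id.mul hf
  have htg : ContinuousOn (fun t => t * g t) (Ioo a b) := continuousOn_id.mul hg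
  set q : ℝ → ℝ := fun z => (∫ t in z..b, t * f t) / ∫ t in z..b, t * g t
  have hq : ∀ x ∈ Ioo a b, HasDerivAt q 0 x := fun x hx => by
    have hd : HasDerivAt q _ x :=
      (hasDerivAt_integral_left_of_continuousOn htf hfi hx).div
        (hasDerivAt_integral_left_of_continuousOn htg hgi hx) (hg0 x hx)
    convert hd using 1
    rw [hfh x hx, hgh x hx]
    ring
  obtain ⟨c, hc⟩ := isOpen_Ioo.exists_is_const_of_deriv_eq_zero isPreconnected_Ioo
    (fun x hx => (hq x hx).differentiableAt.differentiableWithinAt)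
    (fun x hx => (hq x hx).deriv)
  refine ⟨c, fun x hx => ?_⟩
  have hhg : h x * g x ≠ 0 := hgh x hx ▸ hg0 x hx
  have hqx := hc x hx
  simp only [q, hfh x hx, hgh x hx, div_eq_iff hhg] at hqx
  exact mul_left_cancel₀ (left_ne_zero_of_mul hhg) (by rw [hqx]; ring)

section UnitGompertz

variable {α β : ℝ}

noncomputable def unitGompertzPDF (α β x : ℝ) : ℝ :=
  α * β * exp (-α * (x ^ (-β) - 1)) / x ^ (1 + β)

noncomputable def unitGompertzCDF (α β x : ℝ) : ℝ :=
  exp (-α * (x ^ (-β) - 1))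

theorem unitGompertzCDF_one : unitGompertzCDF α β 1 = 1 := by
  simp [unitGompertzCDF]

theorem tendsto_unitGompertzCDF_zero (hα : 0 < α) (hβ : 0 < β) :
    Tendsto (unitGompertzCDF α β) (𝓝[>] 0) (𝓝 0) := by
  have hpow : Tendsto (fun x : ℝ => x ^ (-β) - 1) (𝓝[>] 0) atTop :=
    tendsto_atTop_add_const_right _ _ (tendsto_rpow_neg_nhdsGT_zero (neg_lt_zero.2 hβ))
  exact tendsto_exp_atBot.comp (hpow.const_mul_atTop_of_neg (neg_lt_zero.2 hα))

theorem hasDerivAt_unitGompertzCDF {x : ℝ} (hx : 0 < x) :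
    HasDerivAt (unitGompertzCDF α β) (unitGompertzPDF α β x) x := by
  have hd : HasDerivAt (unitGompertzCDF α β) _ x :=
    (((hasDerivAt_rpow_const (p := -β) (Or.inl hx.ne')).sub_const 1).const_mul (-α)).exp
  refine hd.congr_deriv ?_
  rw [unitGompertzPDF, div_eq_mul_inv, ← rpow_neg hx.le, show -(1 + β) = -β - 1 by ring]
  ring

theorem continuousOn_unitGompertzPDF : ContinuousOn (unitGompertzPDF α β) (Ioi 0) := by
  have hpow (p : ℝ) : ContinuousOn (fun x : ℝ => x ^ p) (Ioi 0) :=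
    continuousOn_id.rpow_const fun x hx => Or.inl (ne_of_gt hx)
  exact (continuousOn_const.mul (((hpow _).sub continuousOn_const).const_mul _).rexp).div
    (hpow _) fun x hx => (rpow_pos_of_pos hx _).ne'

theorem unitGompertzPDF_pos (hα : 0 < α) (hβ : 0 < β) {x : ℝ} (hx : 0 < x) :
    0 < unitGompertzPDF α β x := by
  unfold unitGompertzPDF
  have := rpow_pos_of_pos hx (1 + β)
  positivity

-- The CDF takes the junk value `exp α` at `0` (as `0 ^ (-β) = 0`): use its limit at `0⁺`.
theorem intervalIntegrable_unitGompertzPDF (hα : 0 < α) (hβ : 0 < β) :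
    IntervalIntegrable (unitGompertzPDF α β) volume 0 1 :=
  intervalIntegrable_deriv_of_nonneg_of_tendsto zero_lt_one
    (fun _ hx => hasDerivAt_unitGompertzCDF hx.1)
    (fun _ hx => (unitGompertzPDF_pos hα hβ hx.1).le) (tendsto_unitGompertzCDF_zero hα hβ)
    ((hasDerivAt_unitGompertzCDF one_pos).continuousAt.tendsto.mono_left nhdsWithin_le_nhds)

theorem integral_unitGompertzPDF (hα : 0 < α) (hβ : 0 < β) :
    ∫ x in (0 : ℝ)..1, unitGompertzPDF α β x = 1 := by
  rw [integral_eq_sub_of_hasDerivAt_of_tendsto zero_lt_one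
    (fun _ hx => hasDerivAt_unitGompertzCDF hx.1) (intervalIntegrable_unitGompertzPDF hα hβ)
    (tendsto_unitGompertzCDF_zero hα hβ)
    ((hasDerivAt_unitGompertzCDF one_pos).continuousAt.tendsto.mono_left nhdsWithin_le_nhds),
    unitGompertzCDF_one, sub_zero]

theorem hasDerivAt_uiGamma_mul_rpow_neg (hα : 0 < α) (hβ : β ≠ 0) {x : ℝ} (hx : 0 < x) :
    HasDerivAt (fun x => exp α * α ^ (1 / β) * uiGamma (1 - 1 / β) (α * x ^ (-β)))
      (x * unitGompertzPDF α β x) x := by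
  have hy : 0 < α * x ^ (-β) := mul_pos hα (rpow_pos_of_pos hx _)
  have hd := ((hasDerivAt_uiGamma (1 - 1 / β) hy).comp x
    ((hasDerivAt_rpow_const (p := -β) (Or.inl hx.ne')).const_mul α)).const_mul
    (exp α * α ^ (1 / β))
  refine hd.congr_deriv ?_
  have hpow : (α * x ^ (-β)) ^ (1 - 1 / β - 1) = (α ^ (1 / β))⁻¹ * x := by
    rw [show 1 - 1 / β - 1 = -(1 / β) by ring, mul_rpow hα.le (rpow_nonneg hx.le _),
      ← rpow_mul hx.le, neg_mul_neg, mul_one_div_cancel hβ, rpow_one, rpow_neg hα.le]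
  have hexp : exp α * exp (-(α * x ^ (-β))) = exp (-α * (x ^ (-β) - 1)) := by
    rw [← exp_add]; ring_nf
  have hxβ : x ^ (-β - 1) = x ^ (-β) / x := by
    rw [rpow_sub_one hx.ne']
  have hx1β : x ^ (1 + β) = x * (x ^ (-β))⁻¹ := by
    rw [rpow_add hx, rpow_one, rpow_neg hx.le, inv_inv]
  have hα' : α ^ (1 / β) ≠ 0 := (rpow_pos_of_pos hα _).ne'
  rw [hpow, unitGompertzPDF, ← hexp, hxβ, hx1β]
  field_simp

theorem integral_mul_unitGompertzPDF (hα : 0 < α) (hβ : 0 < β) {x : ℝ} (hx : 0 < x) :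
    ∫ t in x..1, t * unitGompertzPDF α β t =
      α ^ (1 / β) / (α * β) * exp (α / x ^ β) * x ^ (1 + β) *
        (uiGamma (1 - 1 / β) α - uiGamma (1 - 1 / β) (α / x ^ β)) *
        unitGompertzPDF α β x := by
  have hpos : uIcc x 1 ⊆ Ioi 0 := fun t ht => lt_of_lt_of_le (lt_min hx one_pos) ht.1
  rw [integral_eq_sub_of_hasDerivAt
    (fun t ht => hasDerivAt_uiGamma_mul_rpow_neg hα hβ.ne' (hpos ht))
    ((continuousOn_id.mul continuousOn_unitGompertzPDF).mono hpos).intervalIntegrable]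
  have hdiv : α / x ^ β = α * x ^ (-β) := by rw [rpow_neg hx.le, div_eq_mul_inv]
  have hexp : exp (α * x ^ (-β)) * exp (-(α * (x ^ (-β) - 1))) = exp α := by
    rw [← exp_add]; ring_nf
  have hxβ : (0 : ℝ) < x ^ (1 + β) := rpow_pos_of_pos hx _
  simp only [one_rpow, mul_one, hdiv, unitGompertzPDF, neg_mul]
  generalize α ^ (1 / β) = A
  generalize uiGamma (1 - 1 / β) α = G₁
  generalize uiGamma (1 - 1 / β) (α * x ^ (-β)) = G₂
  field_simp
  linear_combination -(A * (G₁ - G₂)) * hexp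

end UnitGompertz

theorem unitGompertz_characterization_right_general (α β : ℝ) (hα : 0 < α) (hβ : 0 < β)
    (h f : ℝ → ℝ)
    (hh : h = fun x => α ^ (1 / β) / (α * β) * Real.exp (α / x ^ β) * x ^ (1 + β) *
      (uiGamma (1 - 1 / β) α - uiGamma (1 - 1 / β) (α / x ^ β)))
    (hf_diff : ∀ x ∈ Set.Ioo (0:ℝ) 1, DifferentiableAt ℝ f x)
    (hf_int : (∫ t in (0:ℝ)..1, f t) = 1)
    (hint : IntervalIntegrable (fun t => t * f t) MeasureTheory.volume 0 1)
    (hid : ∀ x ∈ Set.Ioo (0:ℝ) 1, (∫ t in x..(1:ℝ), t * f t) = h x * f x) :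
    ∀ x ∈ Set.Ioo (0:ℝ) 1,
      f x = α * β * Real.exp (-α * (x ^ (-β) - 1)) / x ^ (1 + β) := by
  have hg_int : IntervalIntegrable (fun t => t * unitGompertzPDF α β t) volume 0 1 :=
    (intervalIntegrable_unitGompertzPDF hα hβ).continuousOn_mul continuousOn_id
  have hg_pos : ∀ x ∈ Ioo (0 : ℝ) 1, 0 < ∫ t in x..1, t * unitGompertzPDF α β t :=
    fun x hx => intervalIntegral_pos_of_pos_on
      (hg_int.mono_set (uIcc_subset_uIcc_right (Icc_subset_uIcc (Ioo_subset_Icc_self hx))))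
      (fun t ht => mul_pos (hx.1.trans ht.1) (unitGompertzPDF_pos hα hβ (hx.1.trans ht.1))) hx.2
  obtain ⟨c, hc⟩ := exists_eqOn_const_mul_of_integral_mul_eq
    (fun x hx => (hf_diff x hx).continuousAt.continuousWithinAt)
    (continuousOn_unitGompertzPDF.mono Ioo_subset_Ioi_self) hint hg_int hid
    (fun x hx => hh ▸ integral_mul_unitGompertzPDF hα hβ hx.1) (fun x hx => (hg_pos x hx).ne')
  have hc1 : c = 1 := calc
    c = ∫ t in (0 : ℝ)..1, c * unitGompertzPDF α β t := by
      rw [intervalIntegral.integral_const_mul, integral_unitGompertzPDF hα hβ, mul_one]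
    _ = 1 := by rw [← integral_congr_Ioo_of_le zero_le_one hc, hf_int]
  intro x hx
  simpa only [hc1, one_mul, unitGompertzPDF] using hc hx

/-- **Theorem 2, converse part.** Let `α, β > 0` and
`h x = (α^(1/β) / (α * β)) * exp (α / x^β) * x^(1+β) *
  (Γ(1 - 1/β; α) - Γ(1 - 1/β; α / x^β))`.
If `f` is a positive differentiable function on `(0, 1)` integrating to `1`
(with `t * f t` integrable on `(0, 1)`) such that
`∫ t in x..1, t * f t = h x * f x` for every `x ∈ (0, 1)`, then `f` is the
unit-Gompertz density: `f x = α * β * exp (-α * (x^(-β) - 1)) / x^(1+β)` on `(0, 1)`. -/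
theorem unitGompertz_characterization_right (α β : ℝ) (hα : 0 < α) (hβ : 0 < β)
    (h f : ℝ → ℝ)
    (hh : h = fun x => α ^ (1 / β) / (α * β) * Real.exp (α / x ^ β) * x ^ (1 + β) *
      (uiGamma (1 - 1 / β) α - uiGamma (1 - 1 / β) (α / x ^ β)))
    (hf_pos : ∀ x ∈ Set.Ioo (0:ℝ) 1, 0 < f x)
    (hf_diff : ∀ x ∈ Set.Ioo (0:ℝ) 1, DifferentiableAt ℝ f x)
    (hf_int : (∫ t in (0:ℝ)..1, f t) = 1)
    (hint : IntervalIntegrable (fun t => t * f t) MeasureTheory.volume 0 1)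
    (hid : ∀ x ∈ Set.Ioo (0:ℝ) 1, (∫ t in x..(1:ℝ), t * f t) = h x * f x) :
    ∀ x ∈ Set.Ioo (0:ℝ) 1,
      f x = α * β * Real.exp (-α * (x ^ (-β) - 1)) / x ^ (1 + β) :=
  unitGompertz_characterization_right_general α β hα hβ h f hh hf_diff hf_int hint hid
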